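/- Let n ≥ 2 and 1 ≤ k ≤ n−1. Let λ = (λ₁,…,λₙ) ∈ Γ_k ⊆ ℝⁿ and let λ' = (λ₁,…,λ_{n−1}) ∈ ℝ^{n−1}. Then σ_k(λ') · σ_k(λ) ≥ σ_{k−1}(λ') · σ_{k+1}(λ). Moreover σ_k(λ) > 0 and σ_{k−1}(λ') > 0, so that σ_k(λ')/σ_{k−1}(λ') ≥ σ_{k+1}(λ)/σ_k(λ). -/

import Mathlib

open scoped BigOperators

noncomputable section

/-- The positive orthant `Γₙ = (0,∞)ⁿ` in `ℝⁿ`. -/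
def PosOrthant (n : ℕ) : Set (Fin n → ℝ) := {lam | ∀ i, 0 < lam i}

/-- A convex invariant cone: an open cone `Γ ⊆ ℝⁿ` with vertex at the origin, `Γ ≠ ℝⁿ`,
which is convex, satisfies `Γ + Γₙ ⊆ Γ`, and is invariant under permutations of coordinates. -/
def IsConvexInvariantCone {n : ℕ} (Γ : Set (Fin n → ℝ)) : Prop :=
  IsOpen Γ ∧ Γ ≠ Set.univ ∧ Convex ℝ Γ ∧
    (∀ lam ∈ Γ, ∀ t : ℝ, 0 < t → t • lam ∈ Γ) ∧
    (∀ lam ∈ Γ, ∀ tau ∈ PosOrthant n, lam + tau ∈ Γ) ∧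
    (∀ lam ∈ Γ, ∀ σ : Equiv.Perm (Fin n), lam ∘ σ ∈ Γ)

/-- The partial derivative `∂f/∂λᵢ(λ)`. -/
def fpd {n : ℕ} (f : (Fin n → ℝ) → ℝ) (i : Fin n) (lam : Fin n → ℝ) : ℝ :=
  fderiv ℝ f lam (Pi.single i 1)

/-- A concave elliptic Hessian operator on a convex invariant cone `Γ`:
a `C²`, permutation-invariant, concave function `f` on `Γ` which is elliptic
(`∂f/∂λᵢ > 0`), positive, and positively homogeneous of degree one. -/
def IsConcaveEllipticHessianOp {n : ℕ} (Γ : Set (Fin n → ℝ)) (f : (Fin n → ℝ) → ℝ) : Prop :=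
  ContDiffOn ℝ 2 f Γ ∧ ConcaveOn ℝ Γ f ∧
    (∀ lam ∈ Γ, ∀ σ : Equiv.Perm (Fin n), f (lam ∘ σ) = f lam) ∧
    (∀ lam ∈ Γ, ∀ i, 0 < fpd f i lam) ∧
    (∀ lam ∈ Γ, 0 < f lam) ∧
    (∀ lam ∈ Γ, ∀ t : ℝ, 0 < t → f (t • lam) = t * f lam)

/-- Condition N: whenever `λ ∈ Γ` satisfies `f(λ) = 1` and `Σᵢ ∂f/∂λᵢ(λ) ≤ C` for some `C > 0`,
then `∂f/∂λᵢ(λ) ≥ 1/(N₁ C^{N₂})` for every `i`. -/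
def ConditionN {n : ℕ} (Γ : Set (Fin n → ℝ)) (f : (Fin n → ℝ) → ℝ) (N₁ N₂ : ℝ) : Prop :=
  ∀ lam ∈ Γ, f lam = 1 → ∀ C : ℝ, 0 < C → (∑ i, fpd f i lam) ≤ C →
    ∀ i, 1 / (N₁ * C ^ N₂) ≤ fpd f i lam

/-- The Hessian matrix `D²u(x)`. -/
def hessianMatrix {n : ℕ} (u : EuclideanSpace ℝ (Fin n) → ℝ) (x : EuclideanSpace ℝ (Fin n)) :
    Matrix (Fin n) (Fin n) ℝ :=
  fun i j => iteratedFDeriv ℝ 2 u x ![EuclideanSpace.single i 1, EuclideanSpace.single j 1]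

/-- The vector of eigenvalues `λ(D²u(x))` of the Hessian of `u` at `x`
(junk value `0` if the Hessian matrix fails to be symmetric). -/
def hessEigen {n : ℕ} (u : EuclideanSpace ℝ (Fin n) → ℝ) (x : EuclideanSpace ℝ (Fin n)) :
    Fin n → ℝ :=
  if h : (hessianMatrix u x).IsHermitian then h.eigenvalues else 0

/-- Condition D for a solution `u` of `F(D²u) = 1` on a set `Ω`: at every point, if an
eigenvalue `λᵢ` of `D²u` exceeds `D₁` then `∂f/∂λᵢ(λ) ⬝ λᵢ ≤ D₂`. -/
def ConditionD {n : ℕ} (f : (Fin n → ℝ) → ℝ) (u : EuclideanSpace ℝ (Fin n) → ℝ)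
    (Ω : Set (EuclideanSpace ℝ (Fin n))) (D₁ D₂ : ℝ) : Prop :=
  ∀ x ∈ Ω, ∀ i, D₁ < hessEigen u x i →
    fpd f i (hessEigen u x) * hessEigen u x i ≤ D₂

/-- The `k`-th elementary symmetric polynomial `σ_k` on `ℝⁿ`. -/
def esymmF (n k : ℕ) (lam : Fin n → ℝ) : ℝ :=
  ∑ s ∈ (Finset.univ : Finset (Fin n)).powersetCard k, ∏ i ∈ s, lam i

/-- The Gårding cone `Γ_k = {λ : σ_j(λ) > 0, j = 1,…,k}`. -/
def GammaK (n k : ℕ) : Set (Fin n → ℝ) :=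
  {lam | ∀ j : ℕ, 1 ≤ j → j ≤ k → 0 < esymmF n j lam}

/-- The cone `Γ̂_p` of vectors all of whose sums of `p` distinct coordinates are positive. -/
def GammaHat (n p : ℕ) : Set (Fin n → ℝ) :=
  {lam | ∀ s : Finset (Fin n), s.card = p → 0 < ∑ i ∈ s, lam i}

/-- The `p`-Monge–Ampère operator `M_p(λ) = ∏_{i₁<⋯<i_p} (λ_{i₁} + ⋯ + λ_{i_p})`. -/
def pMA (n p : ℕ) (lam : Fin n → ℝ) : ℝ :=
  ∏ s ∈ (Finset.univ : Finset (Fin n)).powersetCard p, ∑ i ∈ s, lam i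

/-- Quadratic growth: `u(x) ≥ C⁻¹|x|² − C` for some `C > 0`. -/
def QuadraticGrowth {n : ℕ} (u : EuclideanSpace ℝ (Fin n) → ℝ) : Prop :=
  ∃ C : ℝ, 0 < C ∧ ∀ x, C⁻¹ * ‖x‖ ^ 2 - C ≤ u x

/-- `u` is a quadratic polynomial: `u(x) = ½ xᵀAx + b·x + c` with `A` symmetric. -/
def IsQuadraticPolynomial {n : ℕ} (u : EuclideanSpace ℝ (Fin n) → ℝ) : Prop :=
  ∃ (A : Matrix (Fin n) (Fin n) ℝ) (b : Fin n → ℝ) (c : ℝ), A.IsSymm ∧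
    ∀ x, u x = (1 / 2) * (∑ i, ∑ j, A i j * x i * x j) + (∑ i, b i * x i) + c

/-!
The identity `σ_k(λ) = σ_k(λ') + λₙ σ_{k-1}(λ')` turns the difference
`σ_k(λ')σ_k(λ) - σ_{k-1}(λ')σ_{k+1}(λ)` into `σ_k(λ')² - σ_{k-1}(λ')σ_{k+1}(λ')`, which is
nonnegative by Newton's inequality. Newton's inequality holds for every real vector: the
polynomial `∏ (X + λᵢ)` is real-rooted, real-rootedness survives differentiation (Rolle) and
reversal of coefficients, and these two operations reduce the inequality between three
consecutive coefficients to the discriminant of a real-rooted quadratic.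

The same identity, with Newton's inequality for `λ'`, propagates `σ_j(λ') > 0` from `j` to
`j + 1` as long as `σ_{j+1}(λ)` and `σ_{j+2}(λ)` are positive; this gives `σ_{k-1}(λ') > 0`.
-/

open Polynomial

namespace Polynomial

theorem Splits.derivative {p : ℝ[X]} (hp : p.Splits) : p.derivative.Splits := by
  rw [splits_iff_card_roots] at hp ⊢
  have h1 := card_roots_le_derivative p
  have h2 := card_roots' p.derivative
  rw [natDegree_derivative] at h2 ⊢
  omega

theorem Splits.reverse {K : Type*} [Field K] {p : K[X]} (hp : p.Splits) : p.reverse.Splits := by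
  induction hp using Submonoid.closure_induction with
  | mem f hf =>
    refine Splits.of_natDegree_le_one ((reverse_natDegree_le f).trans ?_)
    rcases hf with ⟨a, rfl⟩ | ⟨a, rfl⟩
    · simp
    · exact (natDegree_X_add_C a).le
  | one => rw [← C_1, reverse_C]; exact Splits.C 1
  | mul f g _ _ hf hg => rw [reverse_mul_of_domain]; exact hf.mul hg

/-- Writing `p = ∑ binom(N, i) eᵢ Xⁱ` with `N = p.natDegree`, this says `e_i e_{i+2} ≤ e_{i+1}²`
(both sides are multiplied by the same positive constant when `i + 2 ≤ N`). -/
def CoeffNewtonIneq (p : ℝ[X]) (i : ℕ) : Prop :=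
  ((i : ℝ) + 2) * (p.natDegree - i) * (p.coeff i * p.coeff (i + 2)) ≤
    ((i : ℝ) + 1) * (p.natDegree - i - 1) * p.coeff (i + 1) ^ 2

theorem coeffNewtonIneq_succ_of_derivative {p : ℝ[X]} {i : ℕ}
    (h : CoeffNewtonIneq (derivative p) i) : CoeffNewtonIneq p (i + 1) := by
  unfold CoeffNewtonIneq at h ⊢
  rcases Nat.eq_zero_or_pos p.natDegree with h0 | hpos
  · simp [coeff_eq_zero_of_natDegree_lt, h0]
  simp only [coeff_derivative, natDegree_derivative, Nat.cast_sub hpos] at h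
  refine le_of_mul_le_mul_left ?_ (by positivity : (0 : ℝ) < (i + 1) * (i + 2))
  push_cast at h ⊢
  linear_combination h

theorem Splits.coeffNewtonIneq_of_natDegree_eq_add_two {p : ℝ[X]} (hp : p.Splits) {d : ℕ}
    (hd : p.natDegree = d + 2) : CoeffNewtonIneq p d := by
  induction d generalizing p with
  | zero =>
    obtain ⟨x, hx⟩ := hp.exists_eval_eq_zero <| by
      rw [degree_eq_natDegree (by rintro rfl; simp at hd), hd]; decide
    rw [eval_eq_sum_range, hd] at hx
    simp only [Finset.sum_range_succ, Finset.sum_range_zero] at hx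
    have hdiscrim := discrim_eq_sq_of_quadratic_eq_zero
      (a := p.coeff 2) (b := p.coeff 1) (c := p.coeff 0) (x := x) (by linear_combination hx)
    unfold CoeffNewtonIneq discrim at *
    rw [hd]
    push_cast
    nlinarith [sq_nonneg (2 * p.coeff 2 * x + p.coeff 1)]
  | succ d ih =>
    exact coeffNewtonIneq_succ_of_derivative
      (ih hp.derivative (by rw [natDegree_derivative, hd]; rfl))

theorem Splits.coeffNewtonIneq_zero {p : ℝ[X]} (hp : p.Splits) (hN : 2 ≤ p.natDegree) :
    CoeffNewtonIneq p 0 := by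
  obtain ⟨d, hd⟩ : ∃ d, p.natDegree = d + 2 := ⟨p.natDegree - 2, by omega⟩
  unfold CoeffNewtonIneq
  rw [hd]
  by_cases h0 : p.coeff 0 = 0
  · rw [h0]
    push_cast
    ring_nf
    positivity
  have hrev : p.reverse.natDegree = d + 2 := by
    rw [reverse_natDegree, natTrailingDegree_eq_zero.2 (Or.inr h0), hd]; rfl
  have h := hp.reverse.coeffNewtonIneq_of_natDegree_eq_add_two hrev
  unfold CoeffNewtonIneq at h
  rw [hrev, coeff_reverse, coeff_reverse, coeff_reverse, hd, revAt_le (by omega),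
    revAt_le (by omega), revAt_le (by omega)] at h
  simp only [show d + 2 - d = 2 by omega, show d + 2 - (d + 1) = 1 by omega,
    show d + 2 - (d + 2) = 0 by omega] at h
  push_cast at h ⊢
  linear_combination h

theorem Splits.coeffNewtonIneq {p : ℝ[X]} (hp : p.Splits) {i : ℕ} (hi : i + 2 ≤ p.natDegree) :
    CoeffNewtonIneq p i := by
  induction i generalizing p with
  | zero => exact hp.coeffNewtonIneq_zero hi
  | succ i ih =>
    exact coeffNewtonIneq_succ_of_derivative
      (ih hp.derivative (by rw [natDegree_derivative]; omega))

end Polynomial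

namespace Multiset

theorem esymm_cons_succ {R : Type*} [CommSemiring R] (a : R) (s : Multiset R) (k : ℕ) :
    (a ::ₘ s).esymm (k + 1) = s.esymm (k + 1) + a * s.esymm k := by
  simp [esymm, powersetCard_cons, sum_map_mul_left]

theorem esymm_mul_esymm_le_sq (s : Multiset ℝ) (j : ℕ) :
    s.esymm j * s.esymm (j + 2) ≤ s.esymm (j + 1) ^ 2 := by
  by_cases hj : j + 2 ≤ card s
  swap
  · have h0 : s.esymm (j + 2) = 0 := by
      rw [esymm, powersetCard_eq_empty _ (by omega), map_zero, sum_zero]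
    rw [h0, mul_zero]
    exact sq_nonneg _
  obtain ⟨d, hd⟩ : ∃ d, card s = j + 2 + d := ⟨card s - (j + 2), by omega⟩
  set P : ℝ[X] := (s.map fun r => X + C r).prod
  have hP : P.Splits := Splits.multisetProd (by simp)
  have hPdeg : P.natDegree = card s := by
    rw [natDegree_multiset_prod_of_monic _ (by simp [monic_X_add_C])]
    simp
  have h := hP.coeffNewtonIneq (i := d) (by omega)
  unfold CoeffNewtonIneq at h
  rw [hPdeg, prod_X_add_C_coeff _ (by omega), prod_X_add_C_coeff _ (by omega),
    prod_X_add_C_coeff _ (by omega), hd] at h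
  simp only [show j + 2 + d - d = j + 2 by omega, show j + 2 + d - (d + 1) = j + 1 by omega,
    show j + 2 + d - (d + 2) = j by omega] at h
  push_cast at h
  have hnewton : ((d : ℝ) + 2) * (j + 2) * (s.esymm j * s.esymm (j + 2)) ≤
      ((d : ℝ) + 1) * (j + 1) * s.esymm (j + 1) ^ 2 := by
    linear_combination h
  by_contra! hlt
  have hpos : 0 < s.esymm j * s.esymm (j + 2) := (sq_nonneg _).trans_lt hlt
  nlinarith [mul_pos (by positivity : (0 : ℝ) < d + j + 3) hpos,
    mul_pos (by positivity : (0 : ℝ) < (d + 1) * (j + 1)) (sub_pos.2 hlt)]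

end Multiset

theorem esymmF_eq_esymm (n k : ℕ) (x : Fin n → ℝ) :
    esymmF n k x = (Finset.univ.val.map x).esymm k :=
  (Finset.esymm_map_val x _ k).symm

theorem esymmF_zero (n : ℕ) (x : Fin n → ℝ) : esymmF n 0 x = 1 := by
  simp [esymmF]

theorem esymmF_mul_esymmF_le_sq (n j : ℕ) (x : Fin n → ℝ) :
    esymmF n j x * esymmF n (j + 2) x ≤ esymmF n (j + 1) x ^ 2 := by
  simp only [esymmF_eq_esymm]
  exact Multiset.esymm_mul_esymm_le_sq _ j

theorem esymmF_succ_eq_init (m j : ℕ) (x : Fin (m + 1) → ℝ) :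
    esymmF (m + 1) (j + 1) x =
      esymmF m (j + 1) (Fin.init x) + x (Fin.last m) * esymmF m j (Fin.init x) := by
  have hsplit : Finset.univ.val.map x = x (Fin.last m) ::ₘ Finset.univ.val.map (Fin.init x) := by
    rw [Fin.univ_val_map, Fin.univ_val_map, List.ofFn_succ', List.concat_eq_append,
      Multiset.cons_coe, Multiset.coe_eq_coe]
    exact List.perm_append_singleton _ _
  rw [esymmF_eq_esymm, hsplit, Multiset.esymm_cons_succ, esymmF_eq_esymm, esymmF_eq_esymm]

theorem esymmF_init_pos_of_mem_GammaK {m k : ℕ} {lam : Fin (m + 1) → ℝ}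
    (hlam : lam ∈ GammaK (m + 1) k) {j : ℕ} (hj : j < k) : 0 < esymmF m j (Fin.init lam) := by
  induction j with
  | zero => simp [esymmF_zero]
  | succ j ih =>
    have ha := ih (by omega)
    have hnewton := esymmF_mul_esymmF_le_sq m j (Fin.init lam)
    have h1 := hlam (j + 1) (by omega) (by omega)
    have h2 := hlam (j + 2) (by omega) hj
    rw [esymmF_succ_eq_init] at h1 h2
    by_contra! hb
    -- with `a, b, c = σ_j, σ_{j+1}, σ_{j+2}` of `λ'` and `t = λₙ`:
    -- `a (c + t b) > 0` and `-b (b + t a) ≥ 0` add up to `a c > b²`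
    nlinarith [mul_pos ha h2, mul_nonneg (neg_nonneg.2 hb) h1.le]

theorem sigma_quotient_estimate_general (n k : ℕ) (hk1 : 1 ≤ k) (hk2 : k ≤ n - 1)
    (lam : Fin n → ℝ) (hlam : lam ∈ GammaK n k) :
    let lam' : Fin (n - 1) → ℝ := fun i => lam (Fin.castLE (Nat.sub_le n 1) i)
    esymmF (n - 1) (k - 1) lam' * esymmF n (k + 1) lam ≤
        esymmF (n - 1) k lam' * esymmF n k lam ∧
      0 < esymmF n k lam ∧ 0 < esymmF (n - 1) (k - 1) lam' ∧
      esymmF n (k + 1) lam / esymmF n k lam ≤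
        esymmF (n - 1) k lam' / esymmF (n - 1) (k - 1) lam' := by
  obtain ⟨m, rfl⟩ : ∃ m, n = m + 1 := ⟨n - 1, by omega⟩
  obtain ⟨j, rfl⟩ : ∃ j, k = j + 1 := ⟨k - 1, by omega⟩
  show esymmF m j (Fin.init lam) * esymmF (m + 1) (j + 2) lam ≤
      esymmF m (j + 1) (Fin.init lam) * esymmF (m + 1) (j + 1) lam ∧
    0 < esymmF (m + 1) (j + 1) lam ∧ 0 < esymmF m j (Fin.init lam) ∧
    esymmF (m + 1) (j + 2) lam / esymmF (m + 1) (j + 1) lam ≤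
      esymmF m (j + 1) (Fin.init lam) / esymmF m j (Fin.init lam)
  have hσ : 0 < esymmF (m + 1) (j + 1) lam := hlam (j + 1) hk1 le_rfl
  have hσ' : 0 < esymmF m j (Fin.init lam) := esymmF_init_pos_of_mem_GammaK hlam j.lt_succ_self
  have hdefect : esymmF m (j + 1) (Fin.init lam) * esymmF (m + 1) (j + 1) lam -
        esymmF m j (Fin.init lam) * esymmF (m + 1) (j + 2) lam =
      esymmF m (j + 1) (Fin.init lam) ^ 2 -
        esymmF m j (Fin.init lam) * esymmF m (j + 2) (Fin.init lam) := by
    rw [esymmF_succ_eq_init, esymmF_succ_eq_init]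
    ring
  have hnewton := esymmF_mul_esymmF_le_sq m j (Fin.init lam)
  have hcross : esymmF m j (Fin.init lam) * esymmF (m + 1) (j + 2) lam ≤
      esymmF m (j + 1) (Fin.init lam) * esymmF (m + 1) (j + 1) lam := by
    linarith
  exact ⟨hcross, hσ, hσ', (div_le_div_iff₀ hσ hσ').2 (by linarith)⟩

/-- **Lemma.** For `λ ∈ Γ_k ⊆ ℝⁿ` with `λ' = (λ₁,…,λ_{n−1})` one has
`σ_k(λ')σ_k(λ) ≥ σ_{k−1}(λ')σ_{k+1}(λ)`, `σ_k(λ) > 0`, `σ_{k−1}(λ') > 0`, hence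
`σ_k(λ')/σ_{k−1}(λ') ≥ σ_{k+1}(λ)/σ_k(λ)`. -/
theorem sigma_quotient_estimate (n k : ℕ) (hn : 2 ≤ n) (hk1 : 1 ≤ k) (hk2 : k ≤ n - 1)
    (lam : Fin n → ℝ) (hlam : lam ∈ GammaK n k) :
    let lam' : Fin (n - 1) → ℝ := fun i => lam (Fin.castLE (Nat.sub_le n 1) i)
    esymmF (n - 1) (k - 1) lam' * esymmF n (k + 1) lam ≤
        esymmF (n - 1) k lam' * esymmF n k lam ∧
      0 < esymmF n k lam ∧ 0 < esymmF (n - 1) (k - 1) lam' ∧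
      esymmF n (k + 1) lam / esymmF n k lam ≤
        esymmF (n - 1) k lam' / esymmF (n - 1) (k - 1) lam' :=
  sigma_quotient_estimate_general n k hk1 hk2 lam hlam
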